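/- Let 𝕏 be a finite set, n ∈ ℕ, and μ, μ' : [0,1] → probability measures on 𝕏 be measurable ensembles. For a measurable f : 𝕏^n × [0,1]^n → ℝ bounded by M_f, define ⊗^n μ(f) := ∫_{[0,1]^n} Σ_{x ∈ 𝕏^n} f(x,β) ∏_{i=1}^n μ^{β_i}(x_i) dβ. Then |⊗^n μ(f) − ⊗^n μ'(f)| ≤ Σ_{i=0}^{n−1} |⊗^{n−i−1} μ ⊗ (μ − μ') ⊗ ⊗^i μ' (f)|, and each summand equals |∫_0^1 Σ_x g_i(x,α)(μ^α(x) − μ'^α(x)) dα| for some measurable g_i : 𝕏 × [0,1] → ℝ bounded by M_f. -/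
import Mathlib


open MeasureTheory

/-- The `n`-fold product mean field evaluation
`⊗ⁿμ(f) = ∫_{[0,1]ⁿ} Σ_{x∈𝕏ⁿ} f(x,β) ∏ᵢ μ^{βᵢ}(xᵢ) dβ`. -/
noncomputable def prodMF {X : Type*} [Fintype X] (n : ℕ) (μ : ℝ → X → ℝ)
    (f : (Fin n → X) → (Fin n → ℝ) → ℝ) : ℝ :=
  ∫ β in Set.pi Set.univ (fun _ : Fin n => Set.Icc (0:ℝ) 1),
    ∑ x : Fin n → X, f x β * ∏ i, μ (β i) (x i)

/-- The `i`-th telescoping term `⊗^{n-i-1} μ ⊗ (μ - μ') ⊗ ⊗^{i} μ' (f)`, where the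
factor at coordinate `n - i - 1` carries the difference `μ - μ'`, earlier coordinates
carry `μ` and later coordinates carry `μ'`. -/
noncomputable def teleTerm {X : Type*} [Fintype X] (n : ℕ) (μ μ' : ℝ → X → ℝ)
    (f : (Fin n → X) → (Fin n → ℝ) → ℝ) (i : ℕ) : ℝ :=
  ∫ β in Set.pi Set.univ (fun _ : Fin n => Set.Icc (0:ℝ) 1),
    ∑ x : Fin n → X, f x β *
      ∏ j : Fin n,
        (if (j : ℕ) < n - i - 1 then μ (β j) (x j)
         else if (j : ℕ) = n - i - 1 then μ (β j) (x j) - μ' (β j) (x j)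
         else μ' (β j) (x j))

/-! ### Auxiliary lemmas -/

lemma measurable_real_sign : Measurable Real.sign := by
  have : Real.sign = fun r : ℝ => if r < 0 then (-1:ℝ) else if 0 < r then 1 else 0 := rfl
  rw [this]
  exact Measurable.ite (measurableSet_lt measurable_id measurable_const)
    measurable_const (Measurable.ite (measurableSet_lt measurable_const measurable_id)
      measurable_const measurable_const)

lemma abs_real_sign_le (r : ℝ) : |Real.sign r| ≤ 1 := by
  rcases Real.sign_apply_eq r with h | h | h <;> rw [h] <;> norm_num

lemma real_sign_mul (r : ℝ) : Real.sign r * r = |r| := by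
  rcases lt_trichotomy r 0 with h | h | h
  · rw [Real.sign_of_neg h, abs_of_neg h]; ring
  · simp [h]
  · rw [Real.sign_of_pos h, abs_of_pos h]; ring

lemma prod_telescope {n : ℕ} (a b : Fin n → ℝ) :
    ∏ j, a j - ∏ j, b j =
      ∑ k ∈ Finset.range n, ∏ j : Fin n,
        (if (j:ℕ) < k then a j else if (j:ℕ) = k then a j - b j else b j) := by
  have key : ∀ k ∈ Finset.range n,
      ((fun m => ∏ j : Fin n, (if (j:ℕ) < m then a j else b j)) (k+1)
        - (fun m => ∏ j : Fin n, (if (j:ℕ) < m then a j else b j)) k)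
      = ∏ j : Fin n, (if (j:ℕ) < k then a j else if (j:ℕ) = k then a j - b j else b j) := by
    intro k hk
    have hkn : k < n := Finset.mem_range.mp hk
    set K : Fin n := ⟨k, hkn⟩ with hK
    simp only
    rw [← Finset.mul_prod_erase Finset.univ _ (Finset.mem_univ K),
        ← Finset.mul_prod_erase Finset.univ
          (fun j : Fin n => if (j:ℕ) < k then a j else b j) (Finset.mem_univ K),
        ← Finset.mul_prod_erase Finset.univ
          (fun j : Fin n => if (j:ℕ) < k then a j else if (j:ℕ) = k then a j - b j else b j)
          (Finset.mem_univ K)]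
    have h1 : ∀ j ∈ Finset.univ.erase K,
        (if (j:ℕ) < k + 1 then a j else b j) = (if (j:ℕ) < k then a j else b j) := by
      intro j hj
      have hne : (j:ℕ) ≠ k := fun h => (Finset.mem_erase.mp hj).1 (Fin.ext h)
      by_cases h : (j:ℕ) < k
      · rw [if_pos h, if_pos (Nat.lt_succ_of_lt h)]
      · rw [if_neg h, if_neg (by omega)]
    have h2 : ∀ j ∈ Finset.univ.erase K,
        (if (j:ℕ) < k then a j else if (j:ℕ) = k then a j - b j else b j)
          = (if (j:ℕ) < k then a j else b j) := by
      intro j hj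
      have hne : (j:ℕ) ≠ k := fun h => (Finset.mem_erase.mp hj).1 (Fin.ext h)
      by_cases h : (j:ℕ) < k
      · rw [if_pos h, if_pos h]
      · rw [if_neg h, if_neg h, if_neg hne]
    rw [Finset.prod_congr rfl h1, Finset.prod_congr rfl h2]
    have hKk : (K:ℕ) = k := rfl
    have e1 : (if (K:ℕ) < k + 1 then a K else b K) = a K := if_pos (by omega)
    have e2 : (if (K:ℕ) < k then a K else b K) = b K := if_neg (by omega)
    have e3 : (if (K:ℕ) < k then a K else if (K:ℕ) = k then a K - b K else b K) = a K - b K := by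
      rw [if_neg (by omega), if_pos hKk]
    rw [e1, e2, e3]; ring
  calc ∏ j, a j - ∏ j, b j
      = (∏ j : Fin n, (if (j:ℕ) < n then a j else b j))
        - ∏ j : Fin n, (if (j:ℕ) < 0 then a j else b j) := by
        rw [Finset.prod_congr rfl (fun j _ => if_pos j.isLt),
            Finset.prod_congr rfl (fun j _ => if_neg (Nat.not_lt_zero _))]
    _ = ∑ k ∈ Finset.range n,
        ((fun m => ∏ j : Fin n, (if (j:ℕ) < m then a j else b j)) (k+1)
          - (fun m => ∏ j : Fin n, (if (j:ℕ) < m then a j else b j)) k) :=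
        (Finset.sum_range_sub (fun m => ∏ j : Fin n, (if (j:ℕ) < m then a j else b j)) n).symm
    _ = _ := Finset.sum_congr rfl key

/-- The weight carried by the `k`-th telescoping term. -/
noncomputable def teleW {X : Type*} [Fintype X] (n : ℕ) (μ μ' : ℝ → X → ℝ) (k : ℕ)
    (β : Fin n → ℝ) (x : Fin n → X) : ℝ :=
  ∏ j : Fin n, (if (j : ℕ) < k then μ (β j) (x j)
    else if (j : ℕ) = k then μ (β j) (x j) - μ' (β j) (x j) else μ' (β j) (x j))

theorem product_mean_field_telescoping {X : Type*} [Fintype X] (n : ℕ)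
    (μ μ' : ℝ → X → ℝ) (M_f : ℝ) (hM : 0 < M_f)
    (f : (Fin n → X) → (Fin n → ℝ) → ℝ)
    (hμmeas : ∀ x, Measurable (fun α => μ α x))
    (hμ'meas : ∀ x, Measurable (fun α => μ' α x))
    (hμprob : ∀ α : ℝ, (∀ x, 0 ≤ μ α x) ∧ ∑ x, μ α x = 1)
    (hμ'prob : ∀ α : ℝ, (∀ x, 0 ≤ μ' α x) ∧ ∑ x, μ' α x = 1)
    (hfmeas : ∀ x, Measurable (f x))
    (hfbdd : ∀ x β, |f x β| ≤ M_f) :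
    |prodMF n μ f - prodMF n μ' f| ≤ ∑ i ∈ Finset.range n, |teleTerm n μ μ' f i| ∧
      ∀ i ∈ Finset.range n, ∃ g : X → ℝ → ℝ,
        (∀ x, Measurable (g x)) ∧ (∀ x α, |g x α| ≤ M_f) ∧
        |teleTerm n μ μ' f i| =
          |∫ α in Set.Icc (0:ℝ) 1, ∑ x, g x α * (μ α x - μ' α x)| := by
  classical
  set D : Set (Fin n → ℝ) := Set.pi Set.univ (fun _ : Fin n => Set.Icc (0:ℝ) 1) with hDdef
  -- basic measure facts
  have hprobD : IsProbabilityMeasure (volume.restrict D) := by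
    constructor
    rw [Measure.restrict_apply_univ, hDdef, volume_pi_pi]
    simp [Real.volume_Icc]
  have hprobI : IsProbabilityMeasure (volume.restrict (Set.Icc (0:ℝ) 1)) := by
    constructor
    rw [Measure.restrict_apply_univ]
    simp [Real.volume_Icc]
  haveI := hprobD
  haveI := hprobI
  -- bounds on μ, μ'
  have hμ01 : ∀ α x, 0 ≤ μ α x ∧ μ α x ≤ 1 := by
    intro α x
    refine ⟨(hμprob α).1 x, ?_⟩
    calc μ α x ≤ ∑ y, μ α y :=
          Finset.single_le_sum (fun y _ => (hμprob α).1 y) (Finset.mem_univ x)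
      _ = 1 := (hμprob α).2
  have hμ'01 : ∀ α x, 0 ≤ μ' α x ∧ μ' α x ≤ 1 := by
    intro α x
    refine ⟨(hμ'prob α).1 x, ?_⟩
    calc μ' α x ≤ ∑ y, μ' α y :=
          Finset.single_le_sum (fun y _ => (hμ'prob α).1 y) (Finset.mem_univ x)
      _ = 1 := (hμ'prob α).2
  -- integrability helper
  have hIntD : ∀ (φ : (Fin n → ℝ) → ℝ) (C : ℝ), Measurable φ → (∀ β, |φ β| ≤ C) →
      Integrable φ (volume.restrict D) := fun φ C hm hb =>
    ⟨hm.aestronglyMeasurable, HasFiniteIntegral.of_bounded (C := C)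
      (Filter.Eventually.of_forall fun β => by rw [Real.norm_eq_abs]; exact hb β)⟩
  -- the one-dimensional total-variation-like integrand
  set h1d : ℝ → ℝ := fun α => ∑ y, |μ α y - μ' α y| with hh1d
  have hhmeas : Measurable h1d :=
    Finset.measurable_sum _ fun y _ => ((hμmeas y).sub (hμ'meas y)).abs
  have hhnn : ∀ α, 0 ≤ h1d α := fun α => Finset.sum_nonneg fun y _ => abs_nonneg _
  have hhbdd : ∀ α, |h1d α| ≤ 2 * Fintype.card X := by
    intro α
    rw [abs_of_nonneg (hhnn α)]
    calc h1d α ≤ ∑ _y : X, (2:ℝ) := by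
          refine Finset.sum_le_sum fun y _ => ?_
          calc |μ α y - μ' α y| ≤ |μ α y| + |μ' α y| := abs_sub _ _
            _ ≤ 1 + 1 := by
                rw [abs_of_nonneg (hμ01 α y).1, abs_of_nonneg (hμ'01 α y).1]
                exact add_le_add (hμ01 α y).2 (hμ'01 α y).2
            _ = 2 := by norm_num
      _ = 2 * Fintype.card X := by
          rw [Finset.sum_const, nsmul_eq_mul, Finset.card_univ, mul_comm]
  have hhint : Integrable h1d (volume.restrict (Set.Icc (0:ℝ) 1)) :=
    ⟨hhmeas.aestronglyMeasurable, HasFiniteIntegral.of_bounded (C := 2 * Fintype.card X)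
      (Filter.Eventually.of_forall fun α => by rw [Real.norm_eq_abs]; exact hhbdd α)⟩
  set V : ℝ := ∫ α in Set.Icc (0:ℝ) 1, h1d α with hVdef
  have hV0 : 0 ≤ V := integral_nonneg hhnn
  -- the coordinate-evaluation map pushes the restricted measure to Lebesgue on [0,1]
  have hmap : ∀ K : Fin n, (volume.restrict D).map (fun β => β K)
      = volume.restrict (Set.Icc (0:ℝ) 1) := by
    intro K
    refine Measure.ext fun s hs => ?_
    rw [Measure.map_apply (measurable_pi_apply K) hs,
      Measure.restrict_apply (measurable_pi_apply K hs), Measure.restrict_apply hs]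
    have hset : (fun β : Fin n → ℝ => β K) ⁻¹' s ∩ D
        = Set.pi Set.univ (Function.update (fun _ : Fin n => Set.Icc (0:ℝ) 1) K
            (s ∩ Set.Icc 0 1)) := by
      ext β
      simp only [Set.mem_inter_iff, Set.mem_preimage, hDdef, Set.mem_pi, Set.mem_univ,
        true_implies, Function.update_apply]
      constructor
      · rintro ⟨hβ1, hβ2⟩ j
        by_cases hj : j = K
        · subst hj; rw [if_pos rfl]; exact ⟨hβ1, hβ2 j⟩
        · rw [if_neg hj]; exact hβ2 j
      · intro hb
        have hK := hb K; rw [if_pos rfl] at hK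
        refine ⟨hK.1, fun j => ?_⟩
        by_cases hj : j = K
        · subst hj; exact hK.2
        · have := hb j; rwa [if_neg hj] at this
    rw [hset, volume_pi_pi]
    rw [Finset.prod_eq_single K
      (fun j _ hj => by rw [Function.update_of_ne hj]; simp [Real.volume_Icc])
      (fun hK => absurd (Finset.mem_univ K) hK)]
    rw [Function.update_self]
  have hevalV : ∀ K : Fin n, ∫ β in D, h1d (β K) = V := by
    intro K
    rw [hVdef, ← hmap K,
      integral_map (measurable_pi_apply K).aemeasurable hhmeas.aestronglyMeasurable]
  -- measurability and bounds for the telescoping integrands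
  have hWmeas : ∀ k (x : Fin n → X), Measurable (fun β => teleW n μ μ' k β x) := by
    intro k x
    apply Finset.measurable_prod
    intro j _
    by_cases hj1 : (j:ℕ) < k
    · simp only [if_pos hj1]
      exact (hμmeas (x j)).comp (measurable_pi_apply j)
    · by_cases hj2 : (j:ℕ) = k
      · simp only [if_neg hj1, if_pos hj2]
        exact ((hμmeas (x j)).sub (hμ'meas (x j))).comp (measurable_pi_apply j)
      · simp only [if_neg hj1, if_neg hj2]
        exact (hμ'meas (x j)).comp (measurable_pi_apply j)
  have hWabs : ∀ k β (x : Fin n → X), |teleW n μ μ' k β x| ≤ 2 ^ n := by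
    intro k β x
    rw [teleW, Finset.abs_prod]
    calc (∏ j : Fin n, |if (j:ℕ) < k then μ (β j) (x j)
            else if (j:ℕ) = k then μ (β j) (x j) - μ' (β j) (x j) else μ' (β j) (x j)|)
        ≤ ∏ _j : Fin n, (2:ℝ) := by
          refine Finset.prod_le_prod (fun j _ => abs_nonneg _) (fun j _ => ?_)
          by_cases hj1 : (j:ℕ) < k
          · rw [if_pos hj1, abs_of_nonneg (hμ01 _ _).1]
            linarith [(hμ01 (β j) (x j)).2]
          · by_cases hj2 : (j:ℕ) = k
            · rw [if_neg hj1, if_pos hj2]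
              calc |μ (β j) (x j) - μ' (β j) (x j)|
                  ≤ |μ (β j) (x j)| + |μ' (β j) (x j)| := abs_sub _ _
                _ ≤ 1 + 1 := by
                    rw [abs_of_nonneg (hμ01 _ _).1, abs_of_nonneg (hμ'01 _ _).1]
                    exact add_le_add (hμ01 _ _).2 (hμ'01 _ _).2
                _ = 2 := by norm_num
            · rw [if_neg hj1, if_neg hj2, abs_of_nonneg (hμ'01 _ _).1]
              linarith [(hμ'01 (β j) (x j)).2]
      _ = 2 ^ n := by simp
  have hFmeas : ∀ k, Measurable (fun β => ∑ x : Fin n → X, f x β * teleW n μ μ' k β x) :=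
    fun k => Finset.measurable_sum _ fun x _ => (hfmeas x).mul (hWmeas k x)
  have hFbdd : ∀ k β, |∑ x : Fin n → X, f x β * teleW n μ μ' k β x|
      ≤ (Fintype.card (Fin n → X)) * (M_f * 2 ^ n) := by
    intro k β
    calc |∑ x : Fin n → X, f x β * teleW n μ μ' k β x|
        ≤ ∑ x : Fin n → X, |f x β * teleW n μ μ' k β x| := Finset.abs_sum_le_sum_abs _ _
      _ ≤ ∑ _x : Fin n → X, M_f * 2 ^ n := by
          refine Finset.sum_le_sum fun x _ => ?_
          rw [abs_mul]
          exact mul_le_mul (hfbdd x β) (hWabs k β x) (abs_nonneg _) hM.le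
      _ = (Fintype.card (Fin n → X)) * (M_f * 2 ^ n) := by
          rw [Finset.sum_const, nsmul_eq_mul, Finset.card_univ]
  have hFint : ∀ k, Integrable (fun β => ∑ x : Fin n → X, f x β * teleW n μ μ' k β x)
      (volume.restrict D) := fun k => hIntD _ _ (hFmeas k) (hFbdd k)
  -- the key identification of teleTerm
  have hteleEq : ∀ i : ℕ, teleTerm n μ μ' f i
      = ∫ β in D, ∑ x : Fin n → X, f x β * teleW n μ μ' (n - i - 1) β x := fun i => rfl
  -- sum over all configurations of a product factorizes
  have hsum_prod : ∀ (c : Fin n → X → ℝ),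
      (∑ x : Fin n → X, ∏ j, c j (x j)) = ∏ j, ∑ y, c j y := by
    intro c
    rw [← Fintype.piFinset_univ, Finset.sum_prod_piFinset]
  -- pointwise bound for the telescoping integrand
  have hFpt : ∀ k (hkn' : k < n), ∀ β, |∑ x : Fin n → X, f x β * teleW n μ μ' k β x|
      ≤ M_f * h1d (β ⟨k, hkn'⟩) := by
    intro k hkn β
    set K : Fin n := ⟨k, hkn⟩ with hK
    have hKk : (K:ℕ) = k := rfl
    have habs : ∑ x : Fin n → X, |teleW n μ μ' k β x| = h1d (β K) := by
      have e1 : ∀ x : Fin n → X, |teleW n μ μ' k β x|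
          = ∏ j : Fin n, |if (j:ℕ) < k then μ (β j) (x j)
              else if (j:ℕ) = k then μ (β j) (x j) - μ' (β j) (x j) else μ' (β j) (x j)| := by
        intro x; rw [teleW, Finset.abs_prod]
      rw [Finset.sum_congr rfl fun x _ => e1 x,
        hsum_prod (fun j y => |if (j:ℕ) < k then μ (β j) y
          else if (j:ℕ) = k then μ (β j) y - μ' (β j) y else μ' (β j) y|)]
      rw [Finset.prod_eq_single K ?hothers ?habsurd]
      · have eK : ∀ y : X, |if (K:ℕ) < k then μ (β K) y
            else if (K:ℕ) = k then μ (β K) y - μ' (β K) y else μ' (β K) y|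
            = |μ (β K) y - μ' (β K) y| := by
          intro y
          rw [if_neg (by omega : ¬ (K:ℕ) < k), if_pos hKk]
        rw [Finset.sum_congr rfl fun y _ => eK y]
      case hothers =>
        intro j _ hj
        have hne : (j:ℕ) ≠ k := fun hc => hj (Fin.ext hc)
        by_cases hlt : (j:ℕ) < k
        · simp only [if_pos hlt]
          rw [Finset.sum_congr rfl fun y _ => abs_of_nonneg ((hμ01 (β j) y).1)]
          exact (hμprob (β j)).2
        · simp only [if_neg hlt, if_neg hne]
          rw [Finset.sum_congr rfl fun y _ => abs_of_nonneg ((hμ'01 (β j) y).1)]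
          exact (hμ'prob (β j)).2
      case habsurd => intro hK'; exact absurd (Finset.mem_univ K) hK'
    calc |∑ x : Fin n → X, f x β * teleW n μ μ' k β x|
        ≤ ∑ x : Fin n → X, |f x β * teleW n μ μ' k β x| := Finset.abs_sum_le_sum_abs _ _
      _ ≤ ∑ x : Fin n → X, M_f * |teleW n μ μ' k β x| := by
          refine Finset.sum_le_sum fun x _ => ?_
          rw [abs_mul]
          exact mul_le_mul_of_nonneg_right (hfbdd x β) (abs_nonneg _)
      _ = M_f * ∑ x : Fin n → X, |teleW n μ μ' k β x| := (Finset.mul_sum _ _ _).symm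
      _ = M_f * h1d (β K) := by rw [habs]
  -- the key bound |teleTerm| ≤ M_f * V
  have hkey : ∀ k, k < n →
      |∫ β in D, ∑ x : Fin n → X, f x β * teleW n μ μ' k β x| ≤ M_f * V := by
    intro k hkn
    set K : Fin n := ⟨k, hkn⟩ with hK
    have hGint : Integrable (fun β : Fin n → ℝ => M_f * h1d (β K)) (volume.restrict D) := by
      refine hIntD _ (M_f * (2 * Fintype.card X))
        (measurable_const.mul (hhmeas.comp (measurable_pi_apply K))) (fun β => ?_)
      rw [abs_mul, abs_of_pos hM]
      exact mul_le_mul_of_nonneg_left (hhbdd (β K)) hM.le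
    have step1 : |∫ β in D, ∑ x : Fin n → X, f x β * teleW n μ μ' k β x|
        ≤ ∫ β in D, |∑ x : Fin n → X, f x β * teleW n μ μ' k β x| := by
      have := norm_integral_le_integral_norm (μ := volume.restrict D)
        (f := fun β => ∑ x : Fin n → X, f x β * teleW n μ μ' k β x)
      simpa only [Real.norm_eq_abs] using this
    have step2 : (∫ β in D, |∑ x : Fin n → X, f x β * teleW n μ μ' k β x|)
        ≤ ∫ β in D, M_f * h1d (β K) :=
      integral_mono (hFint k).abs hGint (fun β => hFpt k hkn β)
    have step3 : (∫ β in D, M_f * h1d (β K)) = M_f * V := by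
      rw [integral_const_mul, hevalV K]
    linarith
  -- the telescoping identity
  have hGmeas : Measurable (fun β => ∑ x : Fin n → X, f x β * ∏ j, μ (β j) (x j)) :=
    Finset.measurable_sum _ fun x _ => (hfmeas x).mul
      (Finset.measurable_prod _ fun j _ => (hμmeas (x j)).comp (measurable_pi_apply j))
  have hG'meas : Measurable (fun β => ∑ x : Fin n → X, f x β * ∏ j, μ' (β j) (x j)) :=
    Finset.measurable_sum _ fun x _ => (hfmeas x).mul
      (Finset.measurable_prod _ fun j _ => (hμ'meas (x j)).comp (measurable_pi_apply j))
  have hGbdd : ∀ β, |∑ x : Fin n → X, f x β * ∏ j, μ (β j) (x j)|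
      ≤ (Fintype.card (Fin n → X)) * M_f := by
    intro β
    calc |∑ x : Fin n → X, f x β * ∏ j, μ (β j) (x j)|
        ≤ ∑ x : Fin n → X, |f x β * ∏ j, μ (β j) (x j)| := Finset.abs_sum_le_sum_abs _ _
      _ ≤ ∑ _x : Fin n → X, M_f := by
          refine Finset.sum_le_sum fun x _ => ?_
          rw [abs_mul]
          calc |f x β| * |∏ j, μ (β j) (x j)| ≤ M_f * 1 := by
                refine mul_le_mul (hfbdd x β) ?_ (abs_nonneg _) hM.le
                rw [Finset.abs_prod]
                refine Finset.prod_le_one (fun j _ => abs_nonneg _) (fun j _ => ?_)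
                rw [abs_of_nonneg (hμ01 _ _).1]; exact (hμ01 _ _).2
            _ = M_f := mul_one _
      _ = (Fintype.card (Fin n → X)) * M_f := by
          rw [Finset.sum_const, nsmul_eq_mul, Finset.card_univ]
  have hG'bdd : ∀ β, |∑ x : Fin n → X, f x β * ∏ j, μ' (β j) (x j)|
      ≤ (Fintype.card (Fin n → X)) * M_f := by
    intro β
    calc |∑ x : Fin n → X, f x β * ∏ j, μ' (β j) (x j)|
        ≤ ∑ x : Fin n → X, |f x β * ∏ j, μ' (β j) (x j)| := Finset.abs_sum_le_sum_abs _ _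
      _ ≤ ∑ _x : Fin n → X, M_f := by
          refine Finset.sum_le_sum fun x _ => ?_
          rw [abs_mul]
          calc |f x β| * |∏ j, μ' (β j) (x j)| ≤ M_f * 1 := by
                refine mul_le_mul (hfbdd x β) ?_ (abs_nonneg _) hM.le
                rw [Finset.abs_prod]
                refine Finset.prod_le_one (fun j _ => abs_nonneg _) (fun j _ => ?_)
                rw [abs_of_nonneg (hμ'01 _ _).1]; exact (hμ'01 _ _).2
            _ = M_f := mul_one _
      _ = (Fintype.card (Fin n → X)) * M_f := by
          rw [Finset.sum_const, nsmul_eq_mul, Finset.card_univ]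
  have hGint : Integrable (fun β => ∑ x : Fin n → X, f x β * ∏ j, μ (β j) (x j))
      (volume.restrict D) := hIntD _ _ hGmeas hGbdd
  have hG'int : Integrable (fun β => ∑ x : Fin n → X, f x β * ∏ j, μ' (β j) (x j))
      (volume.restrict D) := hIntD _ _ hG'meas hG'bdd
  have hGsub : ∀ β, ((∑ x : Fin n → X, f x β * ∏ j, μ (β j) (x j))
        - ∑ x : Fin n → X, f x β * ∏ j, μ' (β j) (x j))
      = ∑ k ∈ Finset.range n, ∑ x : Fin n → X, f x β * teleW n μ μ' k β x := by
    intro β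
    rw [← Finset.sum_sub_distrib]
    conv_rhs => rw [Finset.sum_comm]
    refine Finset.sum_congr rfl fun x _ => ?_
    simp only [teleW]
    rw [← mul_sub, prod_telescope (fun j => μ (β j) (x j)) (fun j => μ' (β j) (x j)),
      Finset.mul_sum]
  have h1 : prodMF n μ f - prodMF n μ' f = ∑ i ∈ Finset.range n, teleTerm n μ μ' f i := by
    have e : prodMF n μ f - prodMF n μ' f
        = ∫ β in D, ((∑ x : Fin n → X, f x β * ∏ j, μ (β j) (x j))
            - ∑ x : Fin n → X, f x β * ∏ j, μ' (β j) (x j)) := (integral_sub hGint hG'int).symm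
    rw [e, integral_congr_ae (Filter.Eventually.of_forall hGsub),
      integral_finset_sum _ (fun k _ => hFint k),
      ← Finset.sum_range_reflect
        (fun k => ∫ β in D, ∑ x : Fin n → X, f x β * teleW n μ μ' k β x) n]
    refine Finset.sum_congr rfl fun i _ => ?_
    show (∫ β in D, ∑ x : Fin n → X, f x β * teleW n μ μ' (n - 1 - i) β x)
        = teleTerm n μ μ' f i
    rw [hteleEq i, show n - 1 - i = n - i - 1 by omega]
  refine ⟨by rw [h1]; exact Finset.abs_sum_le_sum_abs _ _, ?_⟩
  -- part 2
  intro i hi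
  have hin : i < n := Finset.mem_range.mp hi
  set k : ℕ := n - i - 1 with hkdef
  have hkn : k < n := by omega
  set K : Fin n := ⟨k, hkn⟩ with hK
  have hKk : (K:ℕ) = k := rfl
  by_cases hV : V = 0
  · -- degenerate case: μ = μ' a.e. on [0,1], all terms vanish
    refine ⟨fun _ _ => 0, fun x => measurable_const, fun x α => by simpa using hM.le, ?_⟩
    have hae : ∀ᵐ α ∂(volume.restrict (Set.Icc (0:ℝ) 1)), h1d α = 0 := by
      have := (integral_eq_zero_iff_of_nonneg (fun α => hhnn α) hhint).mp (hVdef ▸ hV)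
      exact this.mono fun α hα => hα
    have haeD : ∀ᵐ β ∂(volume.restrict D), h1d (β K) = 0 := by
      rw [← hmap K] at hae
      exact (ae_map_iff (measurable_pi_apply K).aemeasurable
        (show MeasurableSet {α : ℝ | h1d α = 0} from
          hhmeas (measurableSet_singleton (0:ℝ)))).mp hae
    have hz : (fun β => ∑ x : Fin n → X, f x β * teleW n μ μ' k β x)
        =ᵐ[volume.restrict D] 0 := by
      refine haeD.mono fun β hβ => ?_
      have hxy : ∀ y, μ (β K) y - μ' (β K) y = 0 := by
        intro y
        have h0 : |μ (β K) y - μ' (β K) y| = 0 :=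
          (Finset.sum_eq_zero_iff_of_nonneg (fun y _ => abs_nonneg _)).mp hβ y
            (Finset.mem_univ y)
        exact abs_eq_zero.mp h0
      show (∑ x : Fin n → X, f x β * teleW n μ μ' k β x) = 0
      refine Finset.sum_eq_zero fun x _ => ?_
      have hw : teleW n μ μ' k β x = 0 := by
        refine Finset.prod_eq_zero (Finset.mem_univ K) ?_
        rw [if_neg (by omega : ¬ (K:ℕ) < k), if_pos hKk]
        exact hxy (x K)
      rw [hw, mul_zero]
    have ht0 : teleTerm n μ μ' f i = 0 := by
      rw [hteleEq i, ← hkdef, integral_congr_ae hz]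
      simp
    rw [ht0]
    simp
  · have hVpos : 0 < V := lt_of_le_of_ne hV0 (Ne.symm hV)
    set t : ℝ := (∫ β in D, ∑ x : Fin n → X, f x β * teleW n μ μ' k β x) / V with htdef
    refine ⟨fun x α => t * Real.sign (μ α x - μ' α x), ?_, ?_, ?_⟩
    · intro x
      exact measurable_const.mul (measurable_real_sign.comp ((hμmeas x).sub (hμ'meas x)))
    · intro x α
      have htle : |t| ≤ M_f := by
        rw [htdef, abs_div, abs_of_pos hVpos, div_le_iff₀ hVpos]
        exact hkey k hkn
      calc |t * Real.sign (μ α x - μ' α x)| = |t| * |Real.sign (μ α x - μ' α x)| := abs_mul _ _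
        _ ≤ |t| * 1 := mul_le_mul_of_nonneg_left (abs_real_sign_le _) (abs_nonneg _)
        _ = |t| := mul_one _
        _ ≤ M_f := htle
    · have hrhs : (∫ α in Set.Icc (0:ℝ) 1,
          ∑ x, (t * Real.sign (μ α x - μ' α x)) * (μ α x - μ' α x)) = t * V := by
        have hpt : ∀ α, (∑ x, (t * Real.sign (μ α x - μ' α x)) * (μ α x - μ' α x))
            = t * h1d α := by
          intro α
          rw [hh1d, Finset.mul_sum]
          refine Finset.sum_congr rfl fun y _ => ?_
          rw [mul_assoc, real_sign_mul]
        simp only [hpt]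
        rw [integral_const_mul, hVdef]
      rw [hrhs, hteleEq i, ← hkdef, htdef, div_mul_cancel₀ _ (ne_of_gt hVpos)]
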